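/- Let H ≥ 2 and let n_x, n_u, n_r, n_c be positive integers, with J classes of soft constraints of dimensions n_1, …, n_J. Suppose each stage-cost residual r_k : ℝ^{n_x} × ℝ^{n_u} → ℝ^{n_r} (k = 1,…,H) is L_r-Lipschitz, the dynamics map F : ℝ^{n_x} × ℝ^{n_u} → ℝ^{n_x} is L_F-Lipschitz, and each constraint map c_k : ℝ^{n_x} × ℝ^{n_u} → ℝ^{n_c} and c_{j,k} : ℝ^{n_x} × ℝ^{n_u} → ℝ^{n_j} is L_c-Lipschitz (all with respect to Euclidean norms). Let μ ≥ 0 and γ_1, …, γ_J ≥ 0, and let S be a set of trajectories such that ‖r_k(x_k, u_k)‖ ≤ R for every trajectory z = ((x_k,u_k))_{k=1}^H in S and every k. Then the penalized objective φ is Lipschitz on S with constant L_φ = 2HRL_r + (H−1)μ(1 + L_F + L_c) + (H−1)L_c Σ_{j=1}^J γ_j; that is, |φ(z) − φ(z')| ≤ L_φ ‖z − z'‖ for all z, z' ∈ S. -/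

import Mathlib

open scoped BigOperators

/-- The componentwise negative part `[v]₋ = max(0, −v)` of a vector in Euclidean space. -/
noncomputable def negPart {n : ℕ} (v : EuclideanSpace ℝ (Fin n)) : EuclideanSpace ℝ (Fin n) :=
  WithLp.toLp 2 (fun i => max 0 (-(v i)))


lemma negPart_lip {n : ℕ} (v w : EuclideanSpace ℝ (Fin n)) :
    ‖negPart v - negPart w‖ ≤ ‖v - w‖ := by
  rw [EuclideanSpace.norm_eq, EuclideanSpace.norm_eq]
  apply Real.sqrt_le_sqrt
  apply Finset.sum_le_sum
  intro i _
  have h1 : (negPart v - negPart w) i = max 0 (-(v i)) - max 0 (-(w i)) := rfl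
  have h2 : (v - w) i = v i - w i := rfl
  rw [h1, h2, Real.norm_eq_abs, Real.norm_eq_abs]
  apply pow_le_pow_left₀ (abs_nonneg _) _ 2
  calc |max 0 (-(v i)) - max 0 (-(w i))|
      = |max (-(v i)) 0 - max (-(w i)) 0| := by rw [max_comm 0, max_comm 0]
    _ ≤ |(-(v i)) - (-(w i))| := abs_max_sub_max_le_abs _ _ _
    _ = |v i - w i| := by rw [neg_sub_neg, abs_sub_comm]

lemma sum_negPart_norm_diff {n m : ℕ} {K : ℝ} (f g : ℕ → EuclideanSpace ℝ (Fin n))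
    (h : ∀ k ∈ Finset.range m, ‖f k - g k‖ ≤ K) :
    |∑ k ∈ Finset.range m, ‖negPart (f k)‖ - ∑ k ∈ Finset.range m, ‖negPart (g k)‖| ≤ m * K := by
  rw [← Finset.sum_sub_distrib]
  calc |∑ k ∈ Finset.range m, (‖negPart (f k)‖ - ‖negPart (g k)‖)|
      ≤ ∑ k ∈ Finset.range m, |‖negPart (f k)‖ - ‖negPart (g k)‖| :=
        Finset.abs_sum_le_sum_abs _ _
    _ ≤ ∑ _k ∈ Finset.range m, K := by
        apply Finset.sum_le_sum
        intro k hk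
        calc |‖negPart (f k)‖ - ‖negPart (g k)‖| ≤ ‖negPart (f k) - negPart (g k)‖ :=
              abs_norm_sub_norm_le _ _
          _ ≤ ‖f k - g k‖ := negPart_lip _ _
          _ ≤ K := h k hk
    _ = m * K := by rw [Finset.sum_const, Finset.card_range, nsmul_eq_mul]

lemma abs_add_four (a b c d : ℝ) : |a + b + c + d| ≤ |a| + |b| + |c| + |d| := by
  calc |a + b + c + d| ≤ |a + b + c| + |d| := abs_add_le _ _
    _ ≤ (|a + b| + |c|) + |d| := add_le_add_left (abs_add_le _ _) _
    _ ≤ (|a| + |b| + |c|) + |d| := add_le_add_left (add_le_add_left (abs_add_le _ _) _) _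

set_option maxHeartbeats 1000000 in
/-- Lipschitz continuity of the penalized objective: if the stage-cost residuals `r_k` are
`L_r`-Lipschitz and bounded by `R` on a set `S` of trajectories, the dynamics map `F` is
`L_F`-Lipschitz, and the constraint maps `c_k`, `c_{j,k}` are `L_c`-Lipschitz, then the
penalized objective `φ` with penalties `μ ≥ 0`, `γ_j ≥ 0` is Lipschitz on `S` with constant
`L_φ = 2HRL_r + (H−1)μ(1 + L_F + L_c) + (H−1)L_c Σ_j γ_j`, with respect to the trajectory norm
`‖z − z'‖ = (Σ_k ‖x_k − x'_k‖² + ‖u_k − u'_k‖²)^{1/2}`. -/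
theorem penalized_objective_lipschitz
    (H nx nu nr nc J : ℕ) (hH : 2 ≤ H)
    (hnx : 0 < nx) (hnu : 0 < nu) (hnr : 0 < nr) (hnc : 0 < nc)
    (nj : Fin J → ℕ) (hnj : ∀ j, 0 < nj j)
    (Lr LF Lc R μ : ℝ) (γ : Fin J → ℝ) (hμ : 0 ≤ μ) (hγ : ∀ j, 0 ≤ γ j)
    (r : ℕ → EuclideanSpace ℝ (Fin nx) → EuclideanSpace ℝ (Fin nu) → EuclideanSpace ℝ (Fin nr))
    (F : EuclideanSpace ℝ (Fin nx) → EuclideanSpace ℝ (Fin nu) → EuclideanSpace ℝ (Fin nx))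
    (c : ℕ → EuclideanSpace ℝ (Fin nx) → EuclideanSpace ℝ (Fin nu) → EuclideanSpace ℝ (Fin nc))
    (cs : (j : Fin J) → ℕ → EuclideanSpace ℝ (Fin nx) → EuclideanSpace ℝ (Fin nu) →
      EuclideanSpace ℝ (Fin (nj j)))
    (hr : ∀ k ∈ Finset.range H, ∀ x u x' u',
      ‖r k x u - r k x' u'‖ ≤ Lr * Real.sqrt (‖x - x'‖ ^ 2 + ‖u - u'‖ ^ 2))
    (hF : ∀ x u x' u',
      ‖F x u - F x' u'‖ ≤ LF * Real.sqrt (‖x - x'‖ ^ 2 + ‖u - u'‖ ^ 2))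
    (hc : ∀ k ∈ Finset.range H, ∀ x u x' u',
      ‖c k x u - c k x' u'‖ ≤ Lc * Real.sqrt (‖x - x'‖ ^ 2 + ‖u - u'‖ ^ 2))
    (hcs : ∀ (j : Fin J), ∀ k ∈ Finset.range H, ∀ x u x' u',
      ‖cs j k x u - cs j k x' u'‖ ≤ Lc * Real.sqrt (‖x - x'‖ ^ 2 + ‖u - u'‖ ^ 2))
    (S : Set ((ℕ → EuclideanSpace ℝ (Fin nx)) × (ℕ → EuclideanSpace ℝ (Fin nu))))
    (hR : ∀ z ∈ S, ∀ k ∈ Finset.range H, ‖r k (z.1 k) (z.2 k)‖ ≤ R)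
    (φ : ((ℕ → EuclideanSpace ℝ (Fin nx)) × (ℕ → EuclideanSpace ℝ (Fin nu))) → ℝ)
    (hφ : ∀ z, φ z =
      (∑ k ∈ Finset.range H, ‖r k (z.1 k) (z.2 k)‖ ^ 2)
        + μ * ∑ k ∈ Finset.range (H - 1), ‖z.1 (k + 1) - F (z.1 k) (z.2 k)‖
        + μ * ∑ k ∈ Finset.range (H - 1), ‖negPart (c k (z.1 k) (z.2 k))‖
        + ∑ j : Fin J, γ j *
            ∑ k ∈ Finset.range (H - 1), ‖negPart (cs j k (z.1 k) (z.2 k))‖) :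
    ∀ z ∈ S, ∀ z' ∈ S,
      |φ z - φ z'| ≤
        (2 * H * R * Lr + ((H : ℝ) - 1) * μ * (1 + LF + Lc)
            + ((H : ℝ) - 1) * Lc * ∑ j, γ j) *
          Real.sqrt (∑ k ∈ Finset.range H, (‖z.1 k - z'.1 k‖ ^ 2 + ‖z.2 k - z'.2 k‖ ^ 2)) := by
  intro z hz z' hz'
  have h0H : 0 ∈ Finset.range H := Finset.mem_range.mpr (by omega)
  set D := Real.sqrt (∑ k ∈ Finset.range H, (‖z.1 k - z'.1 k‖ ^ 2 + ‖z.2 k - z'.2 k‖ ^ 2))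
    with hDdef
  have hD0 : 0 ≤ D := Real.sqrt_nonneg _
  have hdk : ∀ k ∈ Finset.range H,
      Real.sqrt (‖z.1 k - z'.1 k‖ ^ 2 + ‖z.2 k - z'.2 k‖ ^ 2) ≤ D := fun k hk =>
    Real.sqrt_le_sqrt (Finset.single_le_sum
      (f := fun k => ‖z.1 k - z'.1 k‖ ^ 2 + ‖z.2 k - z'.2 k‖ ^ 2)
      (fun i _ => by positivity) hk)
  have hxk : ∀ k ∈ Finset.range H, ‖z.1 k - z'.1 k‖ ≤ D := by
    intro k hk
    calc ‖z.1 k - z'.1 k‖ = Real.sqrt (‖z.1 k - z'.1 k‖ ^ 2) :=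
          (Real.sqrt_sq (norm_nonneg _)).symm
      _ ≤ Real.sqrt (‖z.1 k - z'.1 k‖ ^ 2 + ‖z.2 k - z'.2 k‖ ^ 2) :=
          Real.sqrt_le_sqrt (le_add_of_nonneg_right (by positivity))
      _ ≤ D := hdk k hk
  obtain ⟨v, hv1⟩ : ∃ v : EuclideanSpace ℝ (Fin nx), ‖v‖ = 1 :=
    ⟨EuclideanSpace.single ⟨0, hnx⟩ 1, by simp [EuclideanSpace.norm_single]⟩
  have hsq1 : Real.sqrt (‖v - 0‖ ^ 2 + ‖(0 : EuclideanSpace ℝ (Fin nu)) - 0‖ ^ 2) = 1 := by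
    simp [hv1]
  have hLr : 0 ≤ Lr := by
    have h := hr 0 h0H v 0 0 0
    rw [hsq1, mul_one] at h
    exact le_trans (norm_nonneg _) h
  have hLF : 0 ≤ LF := by
    have h := hF v 0 0 0
    rw [hsq1, mul_one] at h
    exact le_trans (norm_nonneg _) h
  have hLc : 0 ≤ Lc := by
    have h := hc 0 h0H v 0 0 0
    rw [hsq1, mul_one] at h
    exact le_trans (norm_nonneg _) h
  have hR0 : 0 ≤ R := le_trans (norm_nonneg _) (hR z hz 0 h0H)
  have hmem : ∀ k ∈ Finset.range (H - 1), k ∈ Finset.range H ∧ (k + 1) ∈ Finset.range H := by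
    intro k hk
    simp only [Finset.mem_range] at *
    exact ⟨by omega, by omega⟩
  -- T1 : stage-cost residual term
  have T1 : |∑ k ∈ Finset.range H, ‖r k (z.1 k) (z.2 k)‖ ^ 2
      - ∑ k ∈ Finset.range H, ‖r k (z'.1 k) (z'.2 k)‖ ^ 2| ≤ H * (2 * R * Lr * D) := by
    rw [← Finset.sum_sub_distrib]
    calc |∑ k ∈ Finset.range H, (‖r k (z.1 k) (z.2 k)‖ ^ 2 - ‖r k (z'.1 k) (z'.2 k)‖ ^ 2)|
        ≤ ∑ k ∈ Finset.range H, |‖r k (z.1 k) (z.2 k)‖ ^ 2 - ‖r k (z'.1 k) (z'.2 k)‖ ^ 2| :=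
          Finset.abs_sum_le_sum_abs _ _
      _ ≤ ∑ _k ∈ Finset.range H, 2 * R * Lr * D := by
          apply Finset.sum_le_sum
          intro k hk
          set a := r k (z.1 k) (z.2 k) with ha'
          set b := r k (z'.1 k) (z'.2 k) with hb'
          have hab : ‖a - b‖ ≤ Lr * D := by
            calc ‖a - b‖ ≤ Lr * Real.sqrt (‖z.1 k - z'.1 k‖ ^ 2 + ‖z.2 k - z'.2 k‖ ^ 2) :=
                  hr k hk _ _ _ _
              _ ≤ Lr * D := mul_le_mul_of_nonneg_left (hdk k hk) hLr
          have ha : ‖a‖ ≤ R := hR z hz k hk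
          have hb : ‖b‖ ≤ R := hR z' hz' k hk
          have habs : |‖a‖ - ‖b‖| ≤ ‖a - b‖ := abs_norm_sub_norm_le a b
          have hfac : ‖a‖ ^ 2 - ‖b‖ ^ 2 = (‖a‖ - ‖b‖) * (‖a‖ + ‖b‖) := by ring
          rw [hfac, abs_mul, abs_of_nonneg (add_nonneg (norm_nonneg a) (norm_nonneg b))]
          calc |‖a‖ - ‖b‖| * (‖a‖ + ‖b‖) ≤ (Lr * D) * (2 * R) := by
                exact mul_le_mul (le_trans habs hab) (by linarith)
                  (add_nonneg (norm_nonneg a) (norm_nonneg b)) (mul_nonneg hLr hD0)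
            _ = 2 * R * Lr * D := by ring
      _ = H * (2 * R * Lr * D) := by rw [Finset.sum_const, Finset.card_range, nsmul_eq_mul]
  -- T2 : dynamics penalty term
  have T2 : |∑ k ∈ Finset.range (H - 1), ‖z.1 (k + 1) - F (z.1 k) (z.2 k)‖
      - ∑ k ∈ Finset.range (H - 1), ‖z'.1 (k + 1) - F (z'.1 k) (z'.2 k)‖|
      ≤ (H - 1 : ℕ) * ((1 + LF) * D) := by
    rw [← Finset.sum_sub_distrib]
    calc |∑ k ∈ Finset.range (H - 1),
            (‖z.1 (k + 1) - F (z.1 k) (z.2 k)‖ - ‖z'.1 (k + 1) - F (z'.1 k) (z'.2 k)‖)|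
        ≤ ∑ k ∈ Finset.range (H - 1),
            |‖z.1 (k + 1) - F (z.1 k) (z.2 k)‖ - ‖z'.1 (k + 1) - F (z'.1 k) (z'.2 k)‖| :=
          Finset.abs_sum_le_sum_abs _ _
      _ ≤ ∑ _k ∈ Finset.range (H - 1), (1 + LF) * D := by
          apply Finset.sum_le_sum
          intro k hk
          obtain ⟨hk1, hk2⟩ := hmem k hk
          have hFk : ‖F (z.1 k) (z.2 k) - F (z'.1 k) (z'.2 k)‖ ≤ LF * D := by
            calc ‖F (z.1 k) (z.2 k) - F (z'.1 k) (z'.2 k)‖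
                ≤ LF * Real.sqrt (‖z.1 k - z'.1 k‖ ^ 2 + ‖z.2 k - z'.2 k‖ ^ 2) := hF _ _ _ _
              _ ≤ LF * D := mul_le_mul_of_nonneg_left (hdk k hk1) hLF
          calc |‖z.1 (k + 1) - F (z.1 k) (z.2 k)‖ - ‖z'.1 (k + 1) - F (z'.1 k) (z'.2 k)‖|
              ≤ ‖(z.1 (k + 1) - F (z.1 k) (z.2 k)) - (z'.1 (k + 1) - F (z'.1 k) (z'.2 k))‖ :=
                abs_norm_sub_norm_le _ _
            _ = ‖(z.1 (k + 1) - z'.1 (k + 1)) - (F (z.1 k) (z.2 k) - F (z'.1 k) (z'.2 k))‖ := by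
                congr 1; abel
            _ ≤ ‖z.1 (k + 1) - z'.1 (k + 1)‖ + ‖F (z.1 k) (z.2 k) - F (z'.1 k) (z'.2 k)‖ :=
                norm_sub_le _ _
            _ ≤ D + LF * D := add_le_add (hxk _ hk2) hFk
            _ = (1 + LF) * D := by ring
      _ = (H - 1 : ℕ) * ((1 + LF) * D) := by
          rw [Finset.sum_const, Finset.card_range, nsmul_eq_mul]
  -- T3 : hard-constraint penalty term
  have T3 : |∑ k ∈ Finset.range (H - 1), ‖negPart (c k (z.1 k) (z.2 k))‖
      - ∑ k ∈ Finset.range (H - 1), ‖negPart (c k (z'.1 k) (z'.2 k))‖|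
      ≤ (H - 1 : ℕ) * (Lc * D) := by
    apply sum_negPart_norm_diff
    intro k hk
    obtain ⟨hk1, _⟩ := hmem k hk
    calc ‖c k (z.1 k) (z.2 k) - c k (z'.1 k) (z'.2 k)‖
        ≤ Lc * Real.sqrt (‖z.1 k - z'.1 k‖ ^ 2 + ‖z.2 k - z'.2 k‖ ^ 2) := hc k hk1 _ _ _ _
      _ ≤ Lc * D := mul_le_mul_of_nonneg_left (hdk k hk1) hLc
  -- T4 : soft-constraint penalty terms
  have T4j : ∀ j : Fin J, |∑ k ∈ Finset.range (H - 1), ‖negPart (cs j k (z.1 k) (z.2 k))‖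
      - ∑ k ∈ Finset.range (H - 1), ‖negPart (cs j k (z'.1 k) (z'.2 k))‖|
      ≤ (H - 1 : ℕ) * (Lc * D) := by
    intro j
    apply sum_negPart_norm_diff
    intro k hk
    obtain ⟨hk1, _⟩ := hmem k hk
    calc ‖cs j k (z.1 k) (z.2 k) - cs j k (z'.1 k) (z'.2 k)‖
        ≤ Lc * Real.sqrt (‖z.1 k - z'.1 k‖ ^ 2 + ‖z.2 k - z'.2 k‖ ^ 2) := hcs j k hk1 _ _ _ _
      _ ≤ Lc * D := mul_le_mul_of_nonneg_left (hdk k hk1) hLc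
  have T4 : |(∑ j : Fin J, γ j * ∑ k ∈ Finset.range (H - 1), ‖negPart (cs j k (z.1 k) (z.2 k))‖)
      - ∑ j : Fin J, γ j * ∑ k ∈ Finset.range (H - 1), ‖negPart (cs j k (z'.1 k) (z'.2 k))‖|
      ≤ (∑ j, γ j) * ((H - 1 : ℕ) * (Lc * D)) := by
    rw [← Finset.sum_sub_distrib]
    calc |∑ j : Fin J, (γ j * ∑ k ∈ Finset.range (H - 1), ‖negPart (cs j k (z.1 k) (z.2 k))‖
            - γ j * ∑ k ∈ Finset.range (H - 1), ‖negPart (cs j k (z'.1 k) (z'.2 k))‖)|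
        ≤ ∑ j : Fin J, |γ j * ∑ k ∈ Finset.range (H - 1), ‖negPart (cs j k (z.1 k) (z.2 k))‖
            - γ j * ∑ k ∈ Finset.range (H - 1), ‖negPart (cs j k (z'.1 k) (z'.2 k))‖| :=
          Finset.abs_sum_le_sum_abs _ _
      _ ≤ ∑ j : Fin J, γ j * ((H - 1 : ℕ) * (Lc * D)) := by
          apply Finset.sum_le_sum
          intro j _
          rw [← mul_sub, abs_mul, abs_of_nonneg (hγ j)]
          exact mul_le_mul_of_nonneg_left (T4j j) (hγ j)
      _ = (∑ j, γ j) * ((H - 1 : ℕ) * (Lc * D)) := (Finset.sum_mul _ _ _).symm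
  have hcast : ((H - 1 : ℕ) : ℝ) = (H : ℝ) - 1 := by
    rw [Nat.cast_sub (by omega : 1 ≤ H), Nat.cast_one]
  rw [hφ z, hφ z']
  set A := ∑ k ∈ Finset.range H, ‖r k (z.1 k) (z.2 k)‖ ^ 2 with hA
  set A' := ∑ k ∈ Finset.range H, ‖r k (z'.1 k) (z'.2 k)‖ ^ 2 with hA'
  set B := ∑ k ∈ Finset.range (H - 1), ‖z.1 (k + 1) - F (z.1 k) (z.2 k)‖ with hB
  set B' := ∑ k ∈ Finset.range (H - 1), ‖z'.1 (k + 1) - F (z'.1 k) (z'.2 k)‖ with hB'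
  set C := ∑ k ∈ Finset.range (H - 1), ‖negPart (c k (z.1 k) (z.2 k))‖ with hC
  set C' := ∑ k ∈ Finset.range (H - 1), ‖negPart (c k (z'.1 k) (z'.2 k))‖ with hC'
  set E := ∑ j : Fin J, γ j * ∑ k ∈ Finset.range (H - 1),
    ‖negPart (cs j k (z.1 k) (z.2 k))‖ with hE
  set E' := ∑ j : Fin J, γ j * ∑ k ∈ Finset.range (H - 1),
    ‖negPart (cs j k (z'.1 k) (z'.2 k))‖ with hE'
  have hsplit : A + μ * B + μ * C + E - (A' + μ * B' + μ * C' + E')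
      = (A - A') + μ * (B - B') + μ * (C - C') + (E - E') := by ring
  calc |A + μ * B + μ * C + E - (A' + μ * B' + μ * C' + E')|
      = |(A - A') + μ * (B - B') + μ * (C - C') + (E - E')| := by rw [hsplit]
    _ ≤ |A - A'| + |μ * (B - B')| + |μ * (C - C')| + |E - E'| := abs_add_four _ _ _ _
    _ = |A - A'| + μ * |B - B'| + μ * |C - C'| + |E - E'| := by
        rw [abs_mul, abs_mul, abs_of_nonneg hμ]
    _ ≤ H * (2 * R * Lr * D) + μ * ((H - 1 : ℕ) * ((1 + LF) * D))
        + μ * ((H - 1 : ℕ) * (Lc * D)) + (∑ j, γ j) * ((H - 1 : ℕ) * (Lc * D)) :=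
        add_le_add (add_le_add (add_le_add T1 (mul_le_mul_of_nonneg_left T2 hμ))
          (mul_le_mul_of_nonneg_left T3 hμ)) T4
    _ = (2 * H * R * Lr + ((H : ℝ) - 1) * μ * (1 + LF + Lc)
          + ((H : ℝ) - 1) * Lc * ∑ j, γ j) * D := by rw [hcast]; ring
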